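/- arXiv:math/0504423 — 3 statements merged into one kernel-verified Lean document; each statement's English description precedes it below -/
import Mathlib

section
/- For every finite subset λ ⊆ X there are *-algebra isomorphisms A_λ ≅ (⊕_{z∈Z, z⊆λ} M₂(ℂ)) ⊕ (⊕_{x∈λ} ℂ) and B_λ ≅ (⊕_{z∈Z, z⊆λ} M₂(ℂ)) ⊕ (⊕_{x∈λ} ℂ); in particular A_λ and B_λ are *-isomorphic finite-dimensional C*-algebras. -/
open scoped Matrix.Norms.L2Operator ENNReal

noncomputable section
set_option synthInstance.maxHeartbeats 1000000
set_option maxHeartbeats 2000000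

/-- The index set `Z`: all two-element subsets of `X`. -/
abbrev TwoSets (X : Type*) : Type _ := {z : Finset X // z.card = 2}

/-- `M_z`, a copy of the C*-algebra of 2×2 complex matrices, realized with rows and
columns indexed by the two elements of `z` (so the standard basis matrices give the
fixed matrix unit `{e_{x,y}^z}_{x,y∈z}`), endowed with the operator norm. -/
abbrev Mz {X : Type*} (z : TwoSets X) : Type _ := Matrix {x // x ∈ z.1} {x // x ∈ z.1} ℂ

instance matrixNormedStarGroup {n : Type*} [Fintype n] [DecidableEq n] :
    NormedStarGroup (Matrix n n ℂ) := CStarRing.to_normedStarGroup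

/-- The bounded product `∏_{z∈Z} M_z` of the `M_z` with the supremum norm. -/
abbrev ProdMz (X : Type*) [DecidableEq X] : Type _ := lp (fun z : TwoSets X => Mz z) ∞

/-- a self-adjoint idempotent in a C*-algebra has norm at most one. -/
lemma norm_le_one_of_proj {E : Type*} [NonUnitalNormedRing E] [StarRing E] [CStarRing E]
    {p : E} (h1 : star p = p) (h2 : p * p = p) : ‖p‖ ≤ 1 := by
  have h := CStarRing.norm_star_mul_self (x := p)
  rw [h1, h2] at h
  nlinarith [norm_nonneg p]

lemma star_stdBasisMatrix' {n : Type*} [Fintype n] [DecidableEq n] (a b : n) :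
    star (Matrix.single a b (1 : ℂ)) = Matrix.single b a 1 := by
  ext i j
  simp only [Matrix.star_apply, Matrix.single, Matrix.of_apply]
  by_cases h1 : a = j <;> by_cases h2 : b = i <;> simp [h1, h2, and_comm]

variable {X : Type*} [DecidableEq X]

/- A choice of a matrix unit `{e_{i,j}^z}_{i,j∈{1,2}}` of `M_z` for each `z` amounts to a
choice `c z` of one of the two elements of `z`; then `e_{1,1}^z` is the diagonal matrix
unit at `c z`. -/

lemma memℓp_projP (c : ∀ z : TwoSets X, {x // x ∈ z.1}) (x : X) :
    Memℓp (fun z : TwoSets X =>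
      if x ∈ z.1 then Matrix.single (c z) (c z) (1 : ℂ) else 0) ∞ := by
  apply memℓp_infty
  refine ⟨1, ?_⟩
  rintro r ⟨z, rfl⟩
  dsimp only
  split_ifs
  · exact norm_le_one_of_proj (star_stdBasisMatrix' _ _) (by simp)
  · simp

/-- The projection `p_x ∈ ∏_{z∈Z} M_z`: `p_x(z) = e_{1,1}^z` if `x ∈ z`, and `0` otherwise. -/
def projP (c : ∀ z : TwoSets X, {x // x ∈ z.1}) (x : X) : ProdMz X :=
  ⟨fun z => if x ∈ z.1 then Matrix.single (c z) (c z) (1 : ℂ) else 0,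
    memℓp_projP c x⟩

lemma memℓp_projQ (x : X) :
    Memℓp (fun z : TwoSets X =>
      (if h : x ∈ z.1 then Matrix.single (⟨x, h⟩ : {x // x ∈ z.1}) ⟨x, h⟩ (1 : ℂ)
      else 0 : Mz z)) ∞ := by
  apply memℓp_infty
  refine ⟨1, ?_⟩
  rintro r ⟨z, rfl⟩
  dsimp only
  split_ifs
  · exact norm_le_one_of_proj (star_stdBasisMatrix' _ _) (by simp)
  · simp

/-- The projection `q_x ∈ ∏_{z∈Z} M_z`: `q_x(z) = e_{x,x}^z` if `x ∈ z`, and `0` otherwise. -/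
def projQ (x : X) : ProdMz X :=
  ⟨fun z => (if h : x ∈ z.1 then Matrix.single (⟨x, h⟩ : {x // x ∈ z.1}) ⟨x, h⟩ (1 : ℂ)
    else 0 : Mz z), memℓp_projQ x⟩

/-- `⊕_{z∈Z} M_z`: the set of finitely supported families, inside the bounded product. -/
def directSum (X : Type*) [DecidableEq X] : Set (ProdMz X) :=
  {f | {z : TwoSets X | f z ≠ 0}.Finite}

/-- `A`: the smallest closed *-subalgebra of `∏_{z∈Z} M_z` containing `⊕_{z∈Z} M_z` and
all the projections `p_x`, `x ∈ X`. -/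
def algA (c : ∀ z : TwoSets X, {x // x ∈ z.1}) : NonUnitalStarSubalgebra ℂ (ProdMz X) :=
  (NonUnitalStarAlgebra.adjoin ℂ (directSum X ∪ Set.range (projP c))).topologicalClosure

/-- `B`: the smallest closed *-subalgebra of `∏_{z∈Z} M_z` containing `⊕_{z∈Z} M_z` and
all the projections `q_x`, `x ∈ X`. -/
def algB (X : Type*) [DecidableEq X] : NonUnitalStarSubalgebra ℂ (ProdMz X) :=
  (NonUnitalStarAlgebra.adjoin ℂ (directSum X ∪ Set.range (projQ (X := X)))).topologicalClosure

/-- The union `⋃_{z ∈ Z, z ⊆ λ} M_z`, as a subset of the bounded product: all elements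
supported at a single `z ⊆ λ`. -/
def MzSingles (lam : Finset X) : Set (ProdMz X) :=
  {f | ∃ (z : TwoSets X) (m : Mz z), z.1 ⊆ lam ∧ f = lp.single ∞ z m}

/-- `A_λ`: the linear span of `⋃_{z ⊆ λ} M_z ∪ {p_x : x ∈ λ}`. -/
def spanA (c : ∀ z : TwoSets X, {x // x ∈ z.1}) (lam : Finset X) : Submodule ℂ (ProdMz X) :=
  Submodule.span ℂ (MzSingles lam ∪ {f | ∃ x ∈ lam, f = projP c x})

/-- `B_λ`: the linear span of `⋃_{z ⊆ λ} M_z ∪ {q_x : x ∈ λ}`. -/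
def spanB (lam : Finset X) : Submodule ℂ (ProdMz X) :=
  Submodule.span ℂ (MzSingles lam ∪ {f | ∃ x ∈ lam, f = projQ x})

/-- The model finite-dimensional C*-algebra `(⊕_{z∈Z, z⊆λ} M₂(ℂ)) ⊕ (⊕_{x∈λ} ℂ)`. -/
abbrev ModelAlg (X : Type*) [DecidableEq X] (lam : Finset X) : Type _ :=
  ({z : TwoSets X // z.1 ⊆ lam} → Matrix (Fin 2) (Fin 2) ℂ) × ({x // x ∈ lam} → ℂ)

section Construction

variable {X : Type*} [DecidableEq X]

/-- The equivalence between a two-element subset and `Fin 2`. -/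
noncomputable def e2 (z : TwoSets X) : {x // x ∈ z.1} ≃ Fin 2 :=
  Finset.equivFinOfCardEq z.2

/-- The algebra isomorphism from `M₂(ℂ)` onto `Mz z` obtained by reindexing. -/
noncomputable def mzAlg (z : TwoSets X) : Matrix (Fin 2) (Fin 2) ℂ ≃ₐ[ℂ] Mz z :=
  Matrix.reindexAlgEquiv ℂ ℂ (e2 z).symm

lemma mzAlg_star (z : TwoSets X) (M : Matrix (Fin 2) (Fin 2) ℂ) :
    mzAlg z (star M) = star (mzAlg z M) := by
  simp [mzAlg, Matrix.star_eq_conjTranspose, Matrix.conjTranspose_reindex]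

variable (d : ∀ z : TwoSets X, {x // x ∈ z.1} → {x // x ∈ z.1})

/-- The generalized diagonal projections, specializing to `projP` and `projQ`. -/
def projD (x : X) : ProdMz X :=
  ⟨fun z => (if h : x ∈ z.1 then
      Matrix.single (d z ⟨x, h⟩) (d z ⟨x, h⟩) (1 : ℂ) else 0 : Mz z), by
    apply memℓp_infty
    refine ⟨1, ?_⟩
    rintro r ⟨z, rfl⟩
    dsimp only
    split_ifs
    · exact norm_le_one_of_proj (star_stdBasisMatrix' _ _) (by simp)
    · simp⟩

lemma projP_eq_projD (c : ∀ z : TwoSets X, {x // x ∈ z.1}) (x : X) :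
    projP c x = projD (fun z _ => c z) x := by
  refine lp.ext (funext fun z => ?_)
  show (if x ∈ z.1 then _ else 0) = dite _ _ _
  by_cases h : x ∈ z.1 <;> simp [h]

lemma projQ_eq_projD (x : X) : projQ x = projD (fun _ x => x) x := rfl

variable (lam : Finset X)

noncomputable instance fintypeZsub : Fintype {z : TwoSets X // z.1 ⊆ lam} := by
  have hinj : Function.Injective
      (fun z : {z : TwoSets X // z.1 ⊆ lam} =>
        (⟨z.1.1, Finset.mem_powerset.2 z.2⟩ : {s // s ∈ lam.powerset})) := by
    intro a b h
    injection h with h'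
    exact Subtype.ext (Subtype.ext h')
  exact Fintype.ofInjective _ hinj

/-- The scalar part of the image of `v` at a coordinate `z`. -/
noncomputable def corrM (v : ModelAlg X lam) (z : TwoSets X) : Mz z :=
  ∑ x : {x // x ∈ lam}, if hx : (x : X) ∈ z.1 then
    v.2 x • Matrix.single (d z ⟨x, hx⟩) (d z ⟨x, hx⟩) (1 : ℂ) else 0

/-- The embedding of the model algebra into the bounded product. -/
noncomputable def psi (v : ModelAlg X lam) : ProdMz X :=
  (∑ w : {z : TwoSets X // z.1 ⊆ lam},
      lp.single ∞ w.1 (mzAlg w.1 (v.1 w) - corrM d lam v w.1))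
    + ∑ x : {x // x ∈ lam}, v.2 x • projD d (x : X)

lemma sum_single_apply (F : ∀ w : {z : TwoSets X // z.1 ⊆ lam}, Mz w.1) (z : TwoSets X) :
    (∑ w : {z : TwoSets X // z.1 ⊆ lam}, lp.single ∞ w.1 (F w) : ProdMz X) z
      = if h : z.1 ⊆ lam then F ⟨z, h⟩ else 0 := by
  rw [lp.coeFn_sum, Finset.sum_apply]
  split_ifs with h
  · rw [Finset.sum_eq_single (⟨z, h⟩ : {z : TwoSets X // z.1 ⊆ lam})]
    · exact lp.single_apply_self ∞ _ _
    · intro w _ hw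
      exact lp.single_apply_ne ∞ w.1 _ (fun hzw => hw (Subtype.ext hzw.symm))
    · intro hmem
      exact absurd (Finset.mem_univ _) hmem
  · refine Finset.sum_eq_zero fun w _ => ?_
    exact lp.single_apply_ne ∞ w.1 _ (fun hzw => h (by rw [hzw]; exact w.2))

lemma psi_apply (v : ModelAlg X lam) (z : TwoSets X) :
    psi d lam v z = if h : z.1 ⊆ lam then mzAlg z (v.1 ⟨z, h⟩) else corrM d lam v z := by
  show ((_ + _ : ProdMz X) : ∀ z, Mz z) z = _
  rw [lp.coeFn_add, Pi.add_apply, sum_single_apply]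
  have hB : (↑(∑ x : {x // x ∈ lam}, v.2 x • projD d (x : X) : ProdMz X) : ∀ z, Mz z) z
      = corrM d lam v z := by
    rw [lp.coeFn_sum, Finset.sum_apply]
    refine Finset.sum_congr rfl fun x _ => ?_
    rw [lp.coeFn_smul, Pi.smul_apply]
    show v.2 x • (if hx : (x : X) ∈ z.1 then
        Matrix.single (d z ⟨x, hx⟩) (d z ⟨x, hx⟩) (1 : ℂ) else 0) = _
    split_ifs with hx
    · rfl
    · exact smul_zero _
  rw [hB]
  split_ifs with h
  · abel
  · exact zero_add _

lemma psi_add (u v : ModelAlg X lam) :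
    psi d lam (u + v) = psi d lam u + psi d lam v := by
  refine lp.ext (funext fun z => ?_)
  rw [lp.coeFn_add, Pi.add_apply]
  rw [psi_apply, psi_apply, psi_apply]
  split_ifs with h
  · exact map_add (mzAlg z) _ _
  · dsimp only [corrM]
    rw [← Finset.sum_add_distrib]
    refine Finset.sum_congr rfl fun x _ => ?_
    split_ifs with hx
    · show (u.2 x + v.2 x) • _ = _
      rw [add_smul]
    · rw [add_zero]

lemma psi_smul (r : ℂ) (v : ModelAlg X lam) :
    psi d lam (r • v) = r • psi d lam v := by
  refine lp.ext (funext fun z => ?_)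
  rw [lp.coeFn_smul, Pi.smul_apply]
  rw [psi_apply, psi_apply]
  split_ifs with h
  · exact map_smul (mzAlg z) _ _
  · dsimp only [corrM]
    rw [Finset.smul_sum]
    refine Finset.sum_congr rfl fun x _ => ?_
    split_ifs with hx
    · show (r * v.2 x) • _ = _
      rw [mul_smul]
    · rw [smul_zero]

lemma psi_zero : psi d lam 0 = 0 := by
  refine lp.ext (funext fun z => ?_)
  rw [lp.coeFn_zero, Pi.zero_apply, psi_apply]
  split_ifs with h
  · show mzAlg z 0 = 0
    exact map_zero _
  · refine Finset.sum_eq_zero fun x _ => ?_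
    split_ifs with hx
    · show (0 : ℂ) • _ = (0 : Mz z)
      rw [zero_smul]
    · rfl

lemma two_mem_eq {z : TwoSets X} (hz : ¬ z.1 ⊆ lam) {x y : X}
    (hx : x ∈ z.1) (hy : y ∈ z.1) (hxl : x ∈ lam) (hyl : y ∈ lam) : x = y := by
  by_contra hne
  have h1 : ({x, y} : Finset X) ⊆ z.1 := by
    intro a ha
    rcases Finset.mem_insert.1 ha with rfl | ha
    · exact hx
    · rw [Finset.mem_singleton.1 ha]; exact hy
  have h2 : ({x, y} : Finset X) = z.1 :=
    Finset.eq_of_subset_of_card_le h1 (by rw [z.2, Finset.card_pair hne])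
  refine hz ?_
  rw [← h2]
  intro a ha
  rcases Finset.mem_insert.1 ha with rfl | ha
  · exact hxl
  · rw [Finset.mem_singleton.1 ha]; exact hyl

lemma psi_mul (u v : ModelAlg X lam) :
    psi d lam (u * v) = psi d lam u * psi d lam v := by
  refine lp.ext (funext fun z => ?_)
  rw [lp.infty_coeFn_mul, Pi.mul_apply]
  rw [psi_apply, psi_apply, psi_apply]
  split_ifs with h
  · exact map_mul (mzAlg z) _ _
  · dsimp only [corrM]
    rw [Finset.sum_mul_sum]
    refine Finset.sum_congr rfl fun x _ => ?_
    rw [Finset.sum_eq_single x]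
    · split_ifs with hx
      · show ((u.2 x * v.2 x) • _ : Mz z) = _
        rw [smul_mul_smul_comm, Matrix.single_mul_single_same, mul_one]
      · rw [mul_zero]
    · intro y _ hyx
      split_ifs with h1 h2
      · exact absurd (Subtype.ext (two_mem_eq lam h h1 h2 x.2 y.2)) (Ne.symm hyx)
      · rw [mul_zero]
      · rw [zero_mul]
      · rw [zero_mul]
    · intro hmem
      exact absurd (Finset.mem_univ x) hmem

lemma psi_star (v : ModelAlg X lam) :
    psi d lam (star v) = star (psi d lam v) := by
  refine lp.ext (funext fun z => ?_)
  rw [lp.star_apply]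
  rw [psi_apply, psi_apply]
  split_ifs with h
  · exact mzAlg_star z _
  · dsimp only [corrM]
    rw [star_sum]
    refine Finset.sum_congr rfl fun x _ => ?_
    split_ifs with hx
    · show star (v.2 x) • _ = star ((v.2 x) • _)
      rw [star_smul, star_stdBasisMatrix']
    · exact (star_zero _).symm

lemma psi_injective [Infinite X] : Function.Injective (psi d lam) := by
  intro u v h
  have hc : ∀ z, psi d lam u z = psi d lam v z := fun z => by rw [h]
  refine Prod.ext (funext fun w => ?_) (funext fun x => ?_)
  · have h1 := hc w.1
    rw [psi_apply, psi_apply, dif_pos w.2, dif_pos w.2] at h1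
    exact (mzAlg w.1).injective h1
  · obtain ⟨y, hy⟩ := Infinite.exists_notMem_finset lam
    have hxy : (x : X) ≠ y := fun hh => hy (hh ▸ x.2)
    set z : TwoSets X := ⟨{(x : X), y}, Finset.card_pair hxy⟩ with hzdef
    have hxz : (x : X) ∈ z.1 := Finset.mem_insert_self _ _
    have hnsub : ¬ z.1 ⊆ lam :=
      fun hs => hy (hs (Finset.mem_insert_of_mem (Finset.mem_singleton_self y)))
    have h2 := hc z
    rw [psi_apply, psi_apply, dif_neg hnsub, dif_neg hnsub] at h2
    have hone : ∀ w : ModelAlg X lam, corrM d lam w z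
        = w.2 x • Matrix.single (d z ⟨x, hxz⟩) (d z ⟨x, hxz⟩) (1 : ℂ) := by
      intro w
      dsimp only [corrM]
      rw [Finset.sum_eq_single x]
      · rw [dif_pos hxz]
      · intro y' _ hy'
        rw [dif_neg]
        intro hmem
        rcases Finset.mem_insert.1 hmem with h1 | h1
        · exact hy' (Subtype.ext h1)
        · exact hy ((Finset.mem_singleton.1 h1) ▸ y'.2)
      · intro hmem
        exact absurd (Finset.mem_univ x) hmem
    rw [hone u, hone v] at h2
    have h3 := congrFun (congrFun h2 (d z ⟨x, hxz⟩)) (d z ⟨x, hxz⟩)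
    simpa [Matrix.single_apply_same] using h3

/-- The star subalgebra given by the range of `psi`. -/
noncomputable def SAlg : NonUnitalStarSubalgebra ℂ (ProdMz X) where
  carrier := Set.range (psi d lam)
  add_mem' := by
    rintro a b ⟨u, rfl⟩ ⟨v, rfl⟩
    exact ⟨u + v, psi_add d lam u v⟩
  zero_mem' := ⟨0, psi_zero d lam⟩
  mul_mem' := by
    rintro a b ⟨u, rfl⟩ ⟨v, rfl⟩
    exact ⟨u * v, psi_mul d lam u v⟩
  smul_mem' := by
    rintro r a ⟨u, rfl⟩
    exact ⟨r • u, psi_smul d lam r u⟩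
  star_mem' := by
    rintro a ⟨u, rfl⟩
    exact ⟨star u, psi_star d lam u⟩

lemma psi_single_mz (w : {z : TwoSets X // z.1 ⊆ lam}) (m : Matrix (Fin 2) (Fin 2) ℂ) :
    psi d lam (Pi.single w m, 0) = lp.single ∞ w.1 (mzAlg w.1 m) := by
  refine lp.ext (funext fun z => ?_)
  rw [psi_apply]
  have hfst : ((Pi.single w m, 0) : ModelAlg X lam).1 = Pi.single w m := rfl
  split_ifs with h
  · rw [hfst]
    rcases eq_or_ne (⟨z, h⟩ : {z : TwoSets X // z.1 ⊆ lam}) w with he | hne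
    · rw [← he, Pi.single_eq_same]
      exact (lp.single_apply_self ∞ _ _).symm
    · rw [Pi.single_eq_of_ne hne, map_zero]
      exact (lp.single_apply_ne ∞ w.1 _ (fun hzw => hne (Subtype.ext hzw))).symm
  · have hz : z ≠ w.1 := fun hzw => h (by rw [hzw]; exact w.2)
    rw [lp.single_apply_ne ∞ w.1 _ hz]
    refine Finset.sum_eq_zero fun x _ => ?_
    split_ifs with hx
    · show ((0 : {x // x ∈ lam} → ℂ) x) • _ = (0 : Mz z)
      rw [Pi.zero_apply, zero_smul]
    · rfl

lemma psi_single_proj (x0 : {x // x ∈ lam}) (a : ℂ) :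
    psi d lam (0, Pi.single x0 a) = a • projD d (x0 : X)
      - ∑ w : {z : TwoSets X // z.1 ⊆ lam}, lp.single ∞ w.1
          (if h : (x0 : X) ∈ w.1.1 then
            a • Matrix.single (d w.1 ⟨x0, h⟩) (d w.1 ⟨x0, h⟩) (1 : ℂ) else 0) := by
  refine lp.ext (funext fun z => ?_)
  rw [lp.coeFn_sub, Pi.sub_apply, lp.coeFn_smul, Pi.smul_apply, psi_apply]
  rw [sum_single_apply lam
    (fun w => if h : (x0 : X) ∈ w.1.1 then
      a • Matrix.single (d w.1 ⟨x0, h⟩) (d w.1 ⟨x0, h⟩) (1 : ℂ) else 0) z]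
  show _ = a • (if h : (x0 : X) ∈ z.1 then
      Matrix.single (d z ⟨x0, h⟩) (d z ⟨x0, h⟩) (1 : ℂ) else 0) - _
  split_ifs with h hx hx
  · -- z ⊆ lam, x0 ∈ z
    show mzAlg z ((0 : {z : TwoSets X // z.1 ⊆ lam} → Matrix (Fin 2) (Fin 2) ℂ) ⟨z, h⟩) = _
    rw [Pi.zero_apply, map_zero, sub_self]
  · -- z ⊆ lam, x0 ∉ z
    show mzAlg z ((0 : {z : TwoSets X // z.1 ⊆ lam} → Matrix (Fin 2) (Fin 2) ℂ) ⟨z, h⟩) = _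
    rw [Pi.zero_apply, map_zero, smul_zero, sub_zero]
  · -- z ⊄ lam, x0 ∈ z
    rw [sub_zero]
    dsimp only [corrM]
    rw [Finset.sum_eq_single x0]
    · rw [dif_pos hx]
      show ((Pi.single x0 a : {x // x ∈ lam} → ℂ) x0) • _ = _
      rw [Pi.single_eq_same]
    · intro y' _ hy'
      split_ifs with hy'z
      · show ((Pi.single x0 a : {x // x ∈ lam} → ℂ) y') • _ = (0 : Mz z)
        rw [Pi.single_eq_of_ne hy', zero_smul]
      · rfl
    · intro hmem
      exact absurd (Finset.mem_univ x0) hmem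
  · -- z ⊄ lam, x0 ∉ z
    rw [smul_zero, sub_zero]
    dsimp only [corrM]
    refine Finset.sum_eq_zero fun y' _ => ?_
    split_ifs with hy'z
    · show ((Pi.single x0 a : {x // x ∈ lam} → ℂ) y') • _ = (0 : Mz z)
      rw [Pi.single_eq_of_ne, zero_smul]
      intro hh
      exact hx (by rw [← hh]; exact hy'z)
    · rfl

lemma single_mem_range {z : TwoSets X} (hz : z.1 ⊆ lam) (m : Mz z) :
    lp.single ∞ z m ∈ Set.range (psi d lam) := by
  refine ⟨(Pi.single ⟨z, hz⟩ ((mzAlg z).symm m), 0), ?_⟩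
  rw [psi_single_mz]
  exact congrArg (lp.single ∞ z) ((mzAlg z).apply_symm_apply m)

lemma coe_SAlg_eq : (SAlg d lam : Set (ProdMz X)) =
    (Submodule.span ℂ (MzSingles lam ∪ {f | ∃ x ∈ lam, f = projD d x}) : Set (ProdMz X)) := by
  apply Set.Subset.antisymm
  · rintro f ⟨v, rfl⟩
    show psi d lam v ∈ Submodule.span ℂ (MzSingles lam ∪ {f | ∃ x ∈ lam, f = projD d x})
    unfold psi
    refine Submodule.add_mem _
      (Submodule.sum_mem _ fun w _ => ?_)
      (Submodule.sum_mem _ fun x _ => Submodule.smul_mem _ _ ?_)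
    · exact Submodule.subset_span (Or.inl ⟨w.1, _, w.2, rfl⟩)
    · exact Submodule.subset_span (Or.inr ⟨(x : X), x.2, rfl⟩)
  · intro f hf
    have hle : Submodule.span ℂ (MzSingles lam ∪ {f | ∃ x ∈ lam, f = projD d x})
        ≤ (SAlg d lam).toNonUnitalSubalgebra.toSubmodule := by
      rw [Submodule.span_le]
      rintro g (⟨z, m, hz, rfl⟩ | ⟨x, hx, rfl⟩)
      · exact single_mem_range d lam hz m
      · have h2 := psi_single_proj d lam ⟨x, hx⟩ (1 : ℂ)
        simp only [one_smul] at h2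
        rw [eq_sub_iff_add_eq] at h2
        show projD d ((⟨x, hx⟩ : {x // x ∈ lam}) : X) ∈ _
        rw [← h2]
        exact Submodule.add_mem _ (Set.mem_range_self _)
          (Submodule.sum_mem _ fun w _ => single_mem_range d lam w.2 _)
    exact hle hf

/-- The star-algebra isomorphism of the model algebra with the image subalgebra. -/
noncomputable def psiEquiv [Infinite X] : ModelAlg X lam ≃⋆ₐ[ℂ] (SAlg d lam) where
  toFun v := ⟨psi d lam v, ⟨v, rfl⟩⟩
  invFun s := Function.invFun (psi d lam) s.1
  left_inv v := Function.leftInverse_invFun (psi_injective d lam) v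
  right_inv s := by
    obtain ⟨s, hs⟩ := s
    obtain ⟨v, rfl⟩ := hs
    exact Subtype.ext
      (congrArg (psi d lam) (Function.leftInverse_invFun (psi_injective d lam) v))
  map_mul' u v := Subtype.ext (psi_mul d lam u v)
  map_add' u v := Subtype.ext (psi_add d lam u v)
  map_smul' r v := Subtype.ext (psi_smul d lam r v)
  map_star' v := Subtype.ext (psi_star d lam v)

end Construction

/- STATEMENT 2: for every finite `λ ⊆ X`, the spans `A_λ` and `B_λ` are *-subalgebras and
there are *-algebra isomorphisms `A_λ ≅ (⊕_{z⊆λ} M₂(ℂ)) ⊕ (⊕_{x∈λ} ℂ) ≅ B_λ`. -/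
theorem stmt2 [Infinite X] (c : ∀ z : TwoSets X, {x // x ∈ z.1}) (lam : Finset X) :
    ∃ SA SB : NonUnitalStarSubalgebra ℂ (ProdMz X),
      (SA : Set (ProdMz X)) = (spanA c lam : Set (ProdMz X)) ∧
      (SB : Set (ProdMz X)) = (spanB lam : Set (ProdMz X)) ∧
      Nonempty (SA ≃⋆ₐ[ℂ] ModelAlg X lam) ∧
      Nonempty (SB ≃⋆ₐ[ℂ] ModelAlg X lam) := by
  refine ⟨SAlg (fun z _ => c z) lam, SAlg (fun _ x => x) lam, ?_, ?_,
    ⟨(psiEquiv (fun z _ => c z) lam).symm⟩, ⟨(psiEquiv (fun _ x => x) lam).symm⟩⟩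
  · rw [coe_SAlg_eq]
    have hset : {f : ProdMz X | ∃ x ∈ lam, f = projD (fun z _ => c z) x}
        = {f : ProdMz X | ∃ x ∈ lam, f = projP c x} := by
      ext f
      constructor
      · rintro ⟨x, hx, rfl⟩
        exact ⟨x, hx, (projP_eq_projD c x).symm⟩
      · rintro ⟨x, hx, rfl⟩
        exact ⟨x, hx, projP_eq_projD c x⟩
    rw [hset]
    rfl
  · rw [coe_SAlg_eq]
    have hset : {f : ProdMz X | ∃ x ∈ lam, f = projD (fun _ x => x) x}
        = {f : ProdMz X | ∃ x ∈ lam, f = projQ x} := by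
      ext f
      constructor
      · rintro ⟨x, hx, rfl⟩
        exact ⟨x, hx, (projQ_eq_projD x).symm⟩
      · rintro ⟨x, hx, rfl⟩
        exact ⟨x, hx, projQ_eq_projD x⟩
    rw [hset]
    rfl

end
end

section
/- Let λ, μ ∈ Λ with λ ⊆ μ, let s, t ∈ l(λ) and s', t' ∈ l(μ). If s' = tu for some u ∈ l(μ∖λ), then f_{s,t}^{(λ)} f_{s',t'}^{(μ)} = f_{su,t'}^{(μ)}; otherwise f_{s,t}^{(λ)} f_{s',t'}^{(μ)} = 0. -/
open scoped Matrix.Norms.L2Operator ENNReal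

noncomputable section
set_option synthInstance.maxHeartbeats 1000000
set_option maxHeartbeats 2000000
set_option linter.unusedSectionVars false

lemma mul_collapse {n ι : Type*} [Fintype n] [DecidableEq n] [Fintype ι] [DecidableEq ι]
    {f g k : ι → n} (hg : Function.Injective g) :
    (∑ u : ι, Matrix.single (f u) (g u) (1 : ℂ)) *
      (∑ u : ι, Matrix.single (g u) (k u) (1 : ℂ)) =
      ∑ u : ι, Matrix.single (f u) (k u) (1 : ℂ) := by
  rw [Finset.sum_mul_sum]
  refine Finset.sum_congr rfl fun u _ => ?_
  rw [Finset.sum_eq_single u]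
  · rw [Matrix.single_mul_single_same, one_mul]
  · intro u' _ hne
    exact Matrix.single_mul_single_of_ne (h := hg.ne (Ne.symm hne)) ..
  · intro hu
    exact absurd (Finset.mem_univ u) hu

lemma norm_sum_std_le_one {n ι : Type*} [Fintype n] [DecidableEq n] [Fintype ι] [DecidableEq ι]
    {f g : ι → n} (hf : Function.Injective f) (hg : Function.Injective g) :
    ‖∑ u : ι, Matrix.single (f u) (g u) (1 : ℂ)‖ ≤ 1 := by
  set v := ∑ u : ι, Matrix.single (f u) (g u) (1 : ℂ) with hv
  have hstar : star v = ∑ u : ι, Matrix.single (g u) (f u) (1 : ℂ) := by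
    rw [hv, star_sum]
    exact Finset.sum_congr rfl fun u _ => star_stdBasisMatrix' _ _
  have hvv : star v * v = ∑ u : ι, Matrix.single (g u) (g u) (1 : ℂ) := by
    rw [hstar, hv]; exact mul_collapse hf
  have hproj : (∑ u : ι, Matrix.single (g u) (g u) (1 : ℂ)) *
      (∑ u : ι, Matrix.single (g u) (g u) (1 : ℂ)) =
      ∑ u : ι, Matrix.single (g u) (g u) (1 : ℂ) := mul_collapse hg
  have hprojstar : star (∑ u : ι, Matrix.single (g u) (g u) (1 : ℂ)) =
      ∑ u : ι, Matrix.single (g u) (g u) (1 : ℂ) := by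
    rw [star_sum]
    exact Finset.sum_congr rfl fun u _ => star_stdBasisMatrix' _ _
  have h1 : ‖star v * v‖ ≤ 1 := by
    rw [hvv]; exact norm_le_one_of_proj hprojstar hproj
  have h2 : ‖star v * v‖ = ‖v‖ * ‖v‖ := CStarRing.norm_star_mul_self
  nlinarith [norm_nonneg v]

variable {X : Type*} [DecidableEq X]

/-- `l(λ)`: the set of bijections `t : {1,…,n} → λ` where `n = |λ|`, realized as the
equivalences `Fin λ.card ≃ λ`; in particular `l(∅)` is a one-point set. -/
abbrev Lbl (lam : Finset X) : Type _ := Fin lam.card ≃ {x // x ∈ lam}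

/-- `M_λ`: a copy of the C*-algebra of `n! × n!` complex matrices (`n = |λ|`), with the
matrix unit `{e^{(λ)}_{s,t}}` indexed by `s, t ∈ l(λ)` (the standard basis matrices),
endowed with the operator norm. -/
abbrev Mlam (lam : Finset X) : Type _ := Matrix (Lbl lam) (Lbl lam) ℂ

/-- The bounded product `∏_{μ∈Λ} M_μ` with the supremum norm. -/
abbrev ProdM (X : Type*) [DecidableEq X] : Type _ := lp (fun mu : Finset X => Mlam mu) ∞

/-- For disjoint finsets, `λ ∪ μ` is in bijection with `λ ⊕ μ`. -/
def unionEquiv {lam mu : Finset X} (h : Disjoint lam mu) :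
    ({x // x ∈ lam} ⊕ {x // x ∈ mu}) ≃ {x // x ∈ lam ∪ mu} :=
  (Equiv.Set.union (Finset.disjoint_coe.mpr h)).symm.trans
    (Equiv.subtypeEquivRight fun x => by simp)

/-- The concatenation `ts ∈ l(λ∪μ)` of `t ∈ l(λ)` and `s ∈ l(μ)`, for disjoint `λ`, `μ`:
`(ts)(i) = t(i)` for `1 ≤ i ≤ n` and `(ts)(i) = s(i-n)` for `n < i ≤ n+m`. -/
def concat {lam mu : Finset X} (h : Disjoint lam mu) (t : Lbl lam) (s : Lbl mu) :
    Lbl (lam ∪ mu) :=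
  (finCongr (Finset.card_union_of_disjoint h)).trans
    ((finSumFinEquiv.symm).trans ((Equiv.sumCongr t s).trans (unionEquiv h)))

/-- Transport of labellings along an equality of finsets. -/
def lblCast {lam mu : Finset X} (h : lam = mu) : Lbl lam ≃ Lbl mu :=
  Equiv.cast (by rw [h])

/-- `su ∈ l(μ)`: the concatenation of `s ∈ l(λ)` and `u ∈ l(μ∖λ)`, for `λ ⊆ μ`. -/
def extLbl {lam mu : Finset X} (h : lam ⊆ mu) (s : Lbl lam) (u : Lbl (mu \ lam)) : Lbl mu :=
  lblCast (Finset.union_sdiff_of_subset h) (concat Finset.disjoint_sdiff s u)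

lemma concat_right_injective {lam mu : Finset X} (h : Disjoint lam mu) (t : Lbl lam) :
    Function.Injective fun s : Lbl mu => concat h t s := by
  intro u u' he
  ext j
  have h1 := congrArg (fun e : Lbl (lam ∪ mu) =>
    e ((finCongr (Finset.card_union_of_disjoint h)).symm (finSumFinEquiv (Sum.inr j)))) he
  simp only [concat, Equiv.trans_apply, Equiv.apply_symm_apply, Equiv.symm_apply_apply,
    Equiv.sumCongr_apply, Sum.map_inr] at h1
  have h2 := (unionEquiv h).injective h1
  simpa using congrArg Subtype.val (Sum.inr.inj h2)

lemma extLbl_right_injective {lam mu : Finset X} (h : lam ⊆ mu) (s : Lbl lam) :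
    Function.Injective fun u : Lbl (mu \ lam) => extLbl h s u := by
  intro u u' he
  exact concat_right_injective Finset.disjoint_sdiff s
    ((lblCast (Finset.union_sdiff_of_subset h)).injective he)

/-- `ι_{μ,λ} : M_λ → M_μ` (for `λ ⊆ μ`): the *-homomorphism determined by
`ι_{μ,λ}(e^{(λ)}_{s,t}) = ∑_{u ∈ l(μ∖λ)} e^{(μ)}_{su,tu}` and linearity. -/
def iotaMat {lam mu : Finset X} (h : lam ⊆ mu) (x : Mlam lam) : Mlam mu :=
  ∑ s : Lbl lam, ∑ t : Lbl lam, ∑ u : Lbl (mu \ lam),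
    x s t • Matrix.single (extLbl h s u) (extLbl h t u) (1 : ℂ)

lemma norm_iotaMat_le {lam mu : Finset X} (h : lam ⊆ mu) (x : Mlam lam) :
    ‖iotaMat h x‖ ≤ ∑ s : Lbl lam, ∑ t : Lbl lam, ‖x s t‖ := by
  refine (norm_sum_le _ _).trans (Finset.sum_le_sum fun s _ => ?_)
  refine (norm_sum_le _ _).trans (Finset.sum_le_sum fun t _ => ?_)
  rw [← Finset.smul_sum, norm_smul]
  calc ‖x s t‖ * ‖∑ u : Lbl (mu \ lam),
        Matrix.single (extLbl h s u) (extLbl h t u) (1 : ℂ)‖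
      ≤ ‖x s t‖ * 1 := by
        refine mul_le_mul_of_nonneg_left ?_ (norm_nonneg _)
        exact norm_sum_std_le_one (extLbl_right_injective h s) (extLbl_right_injective h t)
    _ = ‖x s t‖ := mul_one _

lemma memℓp_iota (lam : Finset X) (x : Mlam lam) :
    Memℓp (fun mu : Finset X => (if h : lam ⊆ mu then iotaMat h x else 0 : Mlam mu)) ∞ := by
  apply memℓp_infty
  refine ⟨∑ s : Lbl lam, ∑ t : Lbl lam, ‖x s t‖, ?_⟩
  rintro r ⟨mu, rfl⟩
  dsimp only
  split_ifs with h
  · exact norm_iotaMat_le h x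
  · simp only [norm_zero]
    positivity

/-- `ι_λ : M_λ → ∏_{μ∈Λ} M_μ`: `ι_λ(x)(μ) = ι_{μ,λ}(x)` if `λ ⊆ μ`, and `0` otherwise. -/
def iotaElem (lam : Finset X) (x : Mlam lam) : ProdM X :=
  ⟨fun mu => (if h : lam ⊆ mu then iotaMat h x else 0 : Mlam mu), memℓp_iota lam x⟩

/-- `f^{(λ)}_{s,t} = ι_λ(e^{(λ)}_{s,t})`. -/
def fElem (lam : Finset X) (s t : Lbl lam) : ProdM X :=
  iotaElem lam (Matrix.single s t 1)

/-- `N_λ = ι_λ(M_λ) ⊆ ∏_{μ∈Λ} M_μ`. -/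
def Nlam (lam : Finset X) : Set (ProdM X) := Set.range (iotaElem lam)

/- STATEMENT 11: for `λ ⊆ μ`, `s, t ∈ l(λ)`, `s', t' ∈ l(μ)`:
if `s' = tu` for some `u ∈ l(μ∖λ)` then `f^{(λ)}_{s,t} f^{(μ)}_{s',t'} = f^{(μ)}_{su,t'}`,
and otherwise `f^{(λ)}_{s,t} f^{(μ)}_{s',t'} = 0`. -/
lemma lblCast_coe {lam mu : Finset X} (h : lam = mu) (e : Lbl lam) (i : Fin mu.card) :
    ((lblCast h e i : {x // x ∈ mu}) : X) = (e (Fin.cast (by rw [h]) i) : X) := by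
  subst h
  simp [lblCast, Equiv.cast_refl]

lemma concat_coe {lam mu : Finset X} (hd : Disjoint lam mu) (t : Lbl lam) (s : Lbl mu)
    (i : Fin (lam ∪ mu).card) :
    ((concat hd t s i : {x // x ∈ lam ∪ mu}) : X) =
      if hi : (i : ℕ) < lam.card then (t ⟨i, hi⟩ : X)
      else (s ⟨(i : ℕ) - lam.card, by
        have h3 : (lam ∪ mu).card = lam.card + mu.card := Finset.card_union_of_disjoint hd
        have := i.2; omega⟩ : X) := by
  have hlt : (i : ℕ) < lam.card + mu.card := by
    have h3 : (lam ∪ mu).card = lam.card + mu.card := Finset.card_union_of_disjoint hd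
    have := i.2; omega
  split_ifs with hi
  · have e1 : finSumFinEquiv.symm (Fin.cast (Finset.card_union_of_disjoint hd) i) =
        Sum.inl ⟨(i : ℕ), hi⟩ := finSumFinEquiv_symm_apply_castAdd ⟨(i : ℕ), hi⟩
    simp [concat, unionEquiv, finCongr, e1]; rfl
  · have hle : lam.card ≤ (i : ℕ) := le_of_not_gt hi
    have h2 : ((i : ℕ) - lam.card) < mu.card := by omega
    have heq : (Fin.cast (Finset.card_union_of_disjoint hd) i) =
        Fin.natAdd lam.card ⟨(i : ℕ) - lam.card, h2⟩ := by ext; simp; omega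
    have e1 : finSumFinEquiv.symm (Fin.cast (Finset.card_union_of_disjoint hd) i) =
        Sum.inr ⟨(i : ℕ) - lam.card, h2⟩ := by
      rw [heq]; exact finSumFinEquiv_symm_apply_natAdd _
    simp [concat, unionEquiv, finCongr, e1]; rfl

lemma extLbl_coe {lam mu : Finset X} (h : lam ⊆ mu) (t : Lbl lam) (u : Lbl (mu \ lam))
    (i : Fin mu.card) :
    ((extLbl h t u i : {x // x ∈ mu}) : X) =
      if hi : (i : ℕ) < lam.card then (t ⟨i, hi⟩ : X)
      else (u ⟨(i : ℕ) - lam.card, by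
        have h1 := i.2
        have h2 := Finset.card_le_card h
        rw [Finset.card_sdiff_of_subset h]
        omega⟩ : X) := by
  rw [extLbl, lblCast_coe, concat_coe]
  simp
lemma coe_congr {lam : Finset X} (e : Lbl lam) {a b : Fin lam.card} (h : (a : ℕ) = (b : ℕ)) :
    ((e a : {x // x ∈ lam}) : X) = (e b : X) := by
  rw [Fin.ext h]

lemma exists_extLbl {lam mu : Finset X} (h : lam ⊆ mu) (t : Lbl lam) (s' : Lbl mu)
    (hyp : ∀ i : Fin lam.card,
      ((s' (Fin.castLE (Finset.card_le_card h) i) : {x // x ∈ mu}) : X) = (t i : X)) :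
    ∃ u : Lbl (mu \ lam), s' = extLbl h t u := by
  have hcard : (mu \ lam).card = mu.card - lam.card := Finset.card_sdiff_of_subset h
  have hle := Finset.card_le_card h
  have hidx : ∀ j : Fin (mu \ lam).card, lam.card + (j : ℕ) < mu.card := by
    intro j; have := j.2; omega
  have hmem : ∀ j : Fin (mu \ lam).card,
      ((s' ⟨lam.card + j, hidx j⟩ : {x // x ∈ mu}) : X) ∈ mu \ lam := by
    intro j
    rw [Finset.mem_sdiff]
    refine ⟨(s' ⟨lam.card + j, hidx j⟩).2, fun hlam => ?_⟩
    set a : {x // x ∈ lam} := ⟨_, hlam⟩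
    have h1 : (t (t.symm a) : X) = (s' ⟨lam.card + j, hidx j⟩ : X) := by
      rw [t.apply_symm_apply]
    have h2 := (hyp (t.symm a)).trans h1
    have h3 := s'.injective (Subtype.ext h2)
    have h4 := congrArg Fin.val h3
    simp only [Fin.coe_castLE] at h4
    have := (t.symm a).2
    omega
  refine ⟨Equiv.ofBijective (fun j => (⟨_, hmem j⟩ : {x // x ∈ mu \ lam}))
    ((Fintype.bijective_iff_injective_and_card _).mpr ⟨?_, by simp [Fintype.card_coe]⟩), ?_⟩
  · intro j j' he
    have h1 : ((s' ⟨lam.card + j, hidx j⟩ : {x // x ∈ mu}) : X)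
        = (s' ⟨lam.card + j', hidx j'⟩ : X) := congrArg (fun z : {x // x ∈ mu \ lam} => (z : X)) he
    have h2 := s'.injective (Subtype.ext h1)
    have h3 := congrArg Fin.val h2
    simp only at h3
    exact Fin.ext (by omega)
  · apply Equiv.ext
    intro i
    apply Subtype.ext
    rw [extLbl_coe]
    split_ifs with hi
    · have := hyp ⟨(i : ℕ), hi⟩
      simp only [Fin.castLE_mk] at this
      rw [← this]
    · have hlt : lam.card + ((i : ℕ) - lam.card) < mu.card := by
        have := i.2; omega
      show ((s' i : {x // x ∈ mu}) : X) = ((s' ⟨lam.card + ((i : ℕ) - lam.card), hlt⟩ : _) : X)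
      have hieq : i = (⟨lam.card + ((i : ℕ) - lam.card), hlt⟩ : Fin mu.card) :=
        Fin.ext (by simp; omega)
      rw [← hieq]

lemma sdiff_union_sdiff' {lam mu nu : Finset X} (h1 : lam ⊆ mu) (h2 : mu ⊆ nu) :
    (mu \ lam) ∪ (nu \ mu) = nu \ lam := by
  ext x
  have a1 : x ∈ lam → x ∈ mu := @h1 x
  have a2 : x ∈ mu → x ∈ nu := @h2 x
  simp only [Finset.mem_union, Finset.mem_sdiff]
  tauto

lemma disjoint_sdiff_sdiff' {lam mu nu : Finset X} :
    Disjoint (mu \ lam) (nu \ mu) := by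
  rw [Finset.disjoint_left]
  intro x hx hx'
  rw [Finset.mem_sdiff] at hx hx'
  exact hx'.2 hx.1

/-- concatenation of `u ∈ l(μ∖λ)` and `w ∈ l(ν∖μ)` into `l(ν∖λ)`. -/
def combine {lam mu nu : Finset X} (h1 : lam ⊆ mu) (h2 : mu ⊆ nu)
    (u : Lbl (mu \ lam)) (w : Lbl (nu \ mu)) : Lbl (nu \ lam) :=
  lblCast (sdiff_union_sdiff' h1 h2) (concat disjoint_sdiff_sdiff' u w)

lemma combine_coe {lam mu nu : Finset X} (h1 : lam ⊆ mu) (h2 : mu ⊆ nu)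
    (u : Lbl (mu \ lam)) (w : Lbl (nu \ mu)) (j : Fin (nu \ lam).card) :
    ((combine h1 h2 u w j : {x // x ∈ nu \ lam}) : X) =
      if hj : (j : ℕ) < (mu \ lam).card then (u ⟨j, hj⟩ : X)
      else (w ⟨(j : ℕ) - (mu \ lam).card, by
        have e1 : (nu \ lam).card = (mu \ lam).card + (nu \ mu).card := by
          rw [← sdiff_union_sdiff' h1 h2, Finset.card_union_of_disjoint disjoint_sdiff_sdiff']
        have := j.2; omega⟩ : X) := by
  rw [combine, lblCast_coe, concat_coe]
  simp

lemma extLbl_assoc {lam mu nu : Finset X} (h1 : lam ⊆ mu) (h2 : mu ⊆ nu)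
    (t : Lbl lam) (u : Lbl (mu \ lam)) (w : Lbl (nu \ mu)) :
    extLbl h2 (extLbl h1 t u) w = extLbl (h1.trans h2) t (combine h1 h2 u w) := by
  have c1 : (mu \ lam).card = mu.card - lam.card := Finset.card_sdiff_of_subset h1
  have c2 : (nu \ mu).card = nu.card - mu.card := Finset.card_sdiff_of_subset h2
  have c3 : (nu \ lam).card = nu.card - lam.card := Finset.card_sdiff_of_subset (h1.trans h2)
  have le1 : lam.card ≤ mu.card := Finset.card_le_card h1
  have le2 : mu.card ≤ nu.card := Finset.card_le_card h2
  apply Equiv.ext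
  intro i
  apply Subtype.ext
  rw [extLbl_coe, extLbl_coe]
  split_ifs with hmu hlam hlam
  · -- i < mu.card, i < lam.card
    rw [extLbl_coe, dif_pos hlam]
  · -- i < mu.card, ¬ i < lam.card : u case
    rw [extLbl_coe, dif_neg hlam, combine_coe,
      dif_pos (show ((⟨(i : ℕ) - lam.card, by omega⟩ : Fin (nu \ lam).card) : ℕ)
        < (mu \ lam).card by show (i : ℕ) - lam.card < _; omega)]
  · omega
  · -- i ≥ mu.card : w case
    rw [combine_coe,
      dif_neg (show ¬ ((⟨(i : ℕ) - lam.card, by omega⟩ : Fin (nu \ lam).card) : ℕ)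
        < (mu \ lam).card by show ¬ ((i : ℕ) - lam.card < _); omega)]
    exact coe_congr w (by show (i : ℕ) - mu.card = (i : ℕ) - lam.card - (mu \ lam).card; omega)
lemma iotaMat_std {lam mu : Finset X} (h : lam ⊆ mu) (s t : Lbl lam) :
    iotaMat h (Matrix.single s t 1) =
      ∑ u : Lbl (mu \ lam), Matrix.single (extLbl h s u) (extLbl h t u) (1 : ℂ) := by
  rw [iotaMat, Finset.sum_eq_single s]
  · rw [Finset.sum_eq_single t]
    · simp [Matrix.single_apply_same]
    · intro t₀ _ hne
      apply Finset.sum_eq_zero; intro u _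
      rw [Matrix.single_apply_of_ne (i := s) (j := t) (c := (1:ℂ)) (i' := s) (j' := t₀) (fun hc => hne hc.2.symm), zero_smul]
    · intro h'; exact absurd (Finset.mem_univ t) h'
  · intro s₀ _ hne
    apply Finset.sum_eq_zero; intro t₀ _
    apply Finset.sum_eq_zero; intro u _
    rw [Matrix.single_apply_of_ne (i := s) (j := t) (c := (1:ℂ)) (i' := s₀) (j' := t₀) (fun hc => hne hc.1.symm), zero_smul]
  · intro h'; exact absurd (Finset.mem_univ s) h'

lemma key1 {lam mu nu : Finset X} (h : lam ⊆ mu) (h2 : mu ⊆ nu) (s t : Lbl lam)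
    (t' : Lbl mu) (u : Lbl (mu \ lam)) :
    (∑ v : Lbl (nu \ lam),
        Matrix.single (extLbl (h.trans h2) s v) (extLbl (h.trans h2) t v) (1 : ℂ)) *
      (∑ w : Lbl (nu \ mu),
        Matrix.single (extLbl h2 (extLbl h t u) w) (extLbl h2 t' w) (1 : ℂ)) =
    ∑ w : Lbl (nu \ mu),
        Matrix.single (extLbl h2 (extLbl h s u) w) (extLbl h2 t' w) (1 : ℂ) := by
  rw [Finset.sum_mul_sum, Finset.sum_comm]
  refine Finset.sum_congr rfl fun w _ => ?_
  rw [Finset.sum_eq_single (combine h h2 u w)]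
  · rw [extLbl_assoc h h2 t u w, Matrix.single_mul_single_same, one_mul,
      extLbl_assoc h h2 s u w]
  · intro v _ hne
    apply Matrix.single_mul_single_of_ne
    rw [extLbl_assoc h h2 t u w]
    exact fun hEq => hne (extLbl_right_injective _ t hEq)
  · intro h'; exact absurd (Finset.mem_univ _) h'

lemma key2 {lam mu nu : Finset X} (h : lam ⊆ mu) (h2 : mu ⊆ nu) (s t : Lbl lam)
    (s' t' : Lbl mu) (hno : ¬ ∃ u : Lbl (mu \ lam), s' = extLbl h t u) :
    (∑ v : Lbl (nu \ lam),
        Matrix.single (extLbl (h.trans h2) s v) (extLbl (h.trans h2) t v) (1 : ℂ)) *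
      (∑ w : Lbl (nu \ mu),
        Matrix.single (extLbl h2 s' w) (extLbl h2 t' w) (1 : ℂ)) = 0 := by
  rw [Finset.sum_mul_sum]
  apply Finset.sum_eq_zero; intro v _
  apply Finset.sum_eq_zero; intro w _
  apply Matrix.single_mul_single_of_ne
  intro hEq
  apply hno
  apply exists_extLbl h t s'
  intro i
  have le1 : lam.card ≤ mu.card := Finset.card_le_card h
  have le2 : mu.card ≤ nu.card := Finset.card_le_card h2
  have hj : (i : ℕ) < nu.card := lt_of_lt_of_le i.2 (le1.trans le2)
  have e := congrArg (fun e : Lbl nu => ((e ⟨(i : ℕ), hj⟩ : {x // x ∈ nu}) : X)) hEq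
  rw [extLbl_coe, extLbl_coe] at e
  rw [dif_pos (show ((⟨(i : ℕ), hj⟩ : Fin nu.card) : ℕ) < lam.card from i.2),
    dif_pos (show ((⟨(i : ℕ), hj⟩ : Fin nu.card) : ℕ) < mu.card from lt_of_lt_of_le i.2 le1)]
      at e
  calc ((s' (Fin.castLE le1 i) : {x // x ∈ mu}) : X)
      = (s' ⟨(i : ℕ), lt_of_lt_of_le i.2 le1⟩ : X) := coe_congr s' (by simp)
    _ = (t ⟨(i : ℕ), i.2⟩ : X) := e.symm
    _ = (t i : X) := coe_congr t rfl
lemma fElem_coe (lam : Finset X) (s t : Lbl lam) (nu : Finset X) :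
    (fElem lam s t : ∀ nu : Finset X, Mlam nu) nu =
      if hh : lam ⊆ nu then
        ∑ u : Lbl (nu \ lam), Matrix.single (extLbl hh s u) (extLbl hh t u) (1 : ℂ)
      else 0 := by
  show (if hh : lam ⊆ nu then iotaMat hh _ else 0) = _
  split_ifs with hh
  · exact iotaMat_std hh s t
  · rfl

theorem stmt11' [Uncountable X] {lam mu : Finset X} (h : lam ⊆ mu)
    (s t : Lbl lam) (s' t' : Lbl mu) :
    (∀ u : Lbl (mu \ lam), s' = extLbl h t u →
      fElem lam s t * fElem mu s' t' = fElem mu (extLbl h s u) t') ∧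
    ((¬ ∃ u : Lbl (mu \ lam), s' = extLbl h t u) →
      fElem lam s t * fElem mu s' t' = 0) := by
  constructor
  · intro u hu
    apply lp.ext
    rw [lp.infty_coeFn_mul]
    funext nu
    rw [Pi.mul_apply, fElem_coe, fElem_coe, fElem_coe]
    by_cases hnu : mu ⊆ nu
    · rw [dif_pos hnu, dif_pos (h.trans hnu), dif_pos hnu, hu]
      exact key1 h hnu s t t' u
    · rw [dif_neg hnu, dif_neg hnu, mul_zero]
  · intro hno
    apply lp.ext
    rw [lp.infty_coeFn_mul, lp.coeFn_zero]
    funext nu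
    rw [Pi.mul_apply, Pi.zero_apply, fElem_coe, fElem_coe]
    by_cases hnu : mu ⊆ nu
    · rw [dif_pos hnu]
      by_cases hl : lam ⊆ nu
      · rw [dif_pos hl]
        have : hl = h.trans hnu := rfl
        exact key2 h hnu s t s' t' hno
      · exact absurd (h.trans hnu) hl
    · rw [dif_neg hnu, mul_zero]
theorem stmt11 [Uncountable X] {lam mu : Finset X} (h : lam ⊆ mu)
    (s t : Lbl lam) (s' t' : Lbl mu) :
    (∀ u : Lbl (mu \ lam), s' = extLbl h t u →
      fElem lam s t * fElem mu s' t' = fElem mu (extLbl h s u) t') ∧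
    ((¬ ∃ u : Lbl (mu \ lam), s' = extLbl h t u) →
      fElem lam s t * fElem mu s' t' = 0) := by
  exact stmt11' h s t s' t'

end
end

section
/- For every n ∈ ℕ, the family {N_λ}_{λ∈Λ_n} is mutually orthogonal: for all λ, μ ∈ Λ_n with λ ≠ μ and all a ∈ N_λ, b ∈ N_μ, one has a·b = 0. -/
open scoped Matrix.Norms.L2Operator ENNReal

noncomputable section
set_option synthInstance.maxHeartbeats 1000000
set_option maxHeartbeats 2000000
set_option linter.unusedSectionVars false

variable {X : Type*} [DecidableEq X]

lemma lblCast_apply_coe {A B : Finset X} (h : A = B) (e : Lbl A) (i : Fin B.card) :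
    ((lblCast h e i : X)) = (e (Fin.cast (by rw [h]) i) : X) := by
  subst h; rfl

lemma unionEquiv_inl_coe {lam mu : Finset X} (h : Disjoint lam mu) (a : {x // x ∈ lam}) :
    ((unionEquiv h (Sum.inl a) : X)) = a := rfl

lemma unionEquiv_inr_coe {lam mu : Finset X} (h : Disjoint lam mu) (b : {x // x ∈ mu}) :
    ((unionEquiv h (Sum.inr b) : X)) = b := rfl

lemma concat_mem_iff {lam mu : Finset X} (h : Disjoint lam mu) (t : Lbl lam) (s : Lbl mu)
    (i : Fin (lam ∪ mu).card) :
    ((concat h t s i : X) ∈ lam) ↔ (i : ℕ) < lam.card := by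
  simp only [concat, Equiv.trans_apply]
  by_cases hlt : (i : ℕ) < lam.card
  · have hc : finCongr (Finset.card_union_of_disjoint h) i = Fin.castAdd mu.card ⟨i, hlt⟩ := by
      ext; simp
    rw [hc, finSumFinEquiv_symm_apply_castAdd]
    simp only [Equiv.sumCongr_apply, Sum.map_inl]
    rw [unionEquiv_inl_coe]
    exact iff_of_true (t _).2 hlt
  · have hc : finCongr (Finset.card_union_of_disjoint h) i =
        Fin.natAdd lam.card ⟨(i : ℕ) - lam.card, by
          have h1 := i.2
          have h2 : (lam ∪ mu).card = lam.card + mu.card := Finset.card_union_of_disjoint h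
          omega⟩ := by
      ext; simp; omega
    rw [hc, finSumFinEquiv_symm_apply_natAdd]
    simp only [Equiv.sumCongr_apply, Sum.map_inr]
    rw [unionEquiv_inr_coe]
    constructor
    · intro hm
      exact absurd (Finset.disjoint_left.mp h hm) (by simp)
    · omega

lemma extLbl_mem_iff {lam nu : Finset X} (h : lam ⊆ nu) (s : Lbl lam) (u : Lbl (nu \ lam))
    (i : Fin nu.card) : ((extLbl h s u i : X) ∈ lam) ↔ (i : ℕ) < lam.card := by
  rw [extLbl, lblCast_apply_coe, concat_mem_iff]
  simp

lemma subset_of_extLbl_eq {lam mu nu : Finset X} (hl : lam ⊆ nu) (hm : mu ⊆ nu)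
    (hcard : lam.card = mu.card) {s : Lbl lam} {u : Lbl (nu \ lam)}
    {s' : Lbl mu} {u' : Lbl (nu \ mu)} (heq : extLbl hl s u = extLbl hm s' u') :
    lam ⊆ mu := by
  intro x hx
  have hxn : x ∈ nu := hl hx
  set i := (extLbl hl s u).symm ⟨x, hxn⟩ with hi
  have h1 : (extLbl hl s u i : X) = x := by simp [hi]
  have h2 : (i : ℕ) < lam.card := (extLbl_mem_iff hl s u i).mp (by rw [h1]; exact hx)
  have h3 : (extLbl hm s' u' i : X) = x := by rw [← heq, h1]
  rw [← h3]
  exact (extLbl_mem_iff hm s' u' i).mpr (hcard ▸ h2)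

lemma extLbl_ne {lam mu nu : Finset X} (hl : lam ⊆ nu) (hm : mu ⊆ nu)
    (hcard : lam.card = mu.card) (hne : lam ≠ mu) (s : Lbl lam) (u : Lbl (nu \ lam))
    (s' : Lbl mu) (u' : Lbl (nu \ mu)) : extLbl hl s u ≠ extLbl hm s' u' := by
  intro heq
  exact hne (Finset.Subset.antisymm (subset_of_extLbl_eq hl hm hcard heq)
    (subset_of_extLbl_eq hm hl hcard.symm heq.symm))

lemma iotaMat_mul_iotaMat_eq_zero {lam mu nu : Finset X} (hl : lam ⊆ nu) (hm : mu ⊆ nu)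
    (hcard : lam.card = mu.card) (hne : lam ≠ mu) (x : Mlam lam) (y : Mlam mu) :
    iotaMat hl x * iotaMat hm y = 0 := by
  simp only [iotaMat, Finset.sum_mul, Finset.mul_sum]
  refine Finset.sum_eq_zero fun s _ => Finset.sum_eq_zero fun t _ =>
    Finset.sum_eq_zero fun u _ => Finset.sum_eq_zero fun s' _ =>
    Finset.sum_eq_zero fun t' _ => Finset.sum_eq_zero fun u' _ => ?_
  rw [smul_mul_assoc, mul_smul_comm,
    Matrix.single_mul_single_of_ne (h := extLbl_ne hl hm hcard hne _ _ _ _),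
    smul_zero, smul_zero]

/- STATEMENT 13: for every `n`, the family `{N_λ}_{λ∈Λ_n}` is mutually orthogonal. -/
theorem stmt13 [Uncountable X] (n : ℕ) (lam mu : Finset X)
    (hlam : lam.card = n) (hmu : mu.card = n) (hne : lam ≠ mu) :
    ∀ a ∈ Nlam lam, ∀ b ∈ Nlam mu, a * b = 0 := by
  rintro a ⟨x, rfl⟩ b ⟨y, rfl⟩
  apply lp.ext
  rw [lp.infty_coeFn_mul, lp.coeFn_zero]
  funext nu
  simp only [Pi.mul_apply, Pi.zero_apply]
  show (if h : lam ⊆ nu then iotaMat h x else 0) * (if h : mu ⊆ nu then iotaMat h y else 0) = 0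
  split_ifs with h1 h2
  · exact iotaMat_mul_iotaMat_eq_zero h1 h2 (hlam.trans hmu.symm) hne x y
  · exact mul_zero _
  · exact zero_mul _
  · exact zero_mul _

end
end
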